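/- arXiv:1704.07083 — 2 statements merged into one kernel-verified Lean document; each statement's English description precedes it below -/
import Mathlib

section
/- Let I ⊆ N^n be a finite initial segment and let (m_{\vec{j}})_{\vec{j}∈I} be any vector of elements of F_q. Then there exists a unique polynomial F in F_q[X_1,...,X_n] with monomial support contained in I such that E(F,\vec{j}) = m_{\vec{j}} for all \vec{j} ∈ I, where E(F,\vec{j}) = H(F, \vec{j} div q)(α_{\vec{j} mod q}). -/
open MvPolynomial

noncomputable def mvHasseDeriv {σ R : Type*} [CommSemiring R] (s : σ →₀ ℕ)
    (F : MvPolynomial σ R) : MvPolynomial σ R :=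
  MvPolynomial.coeff s
    (MvPolynomial.eval₂ (MvPolynomial.C.comp MvPolynomial.C)
      (fun i => MvPolynomial.C (MvPolynomial.X i) + MvPolynomial.X i) F)

noncomputable def Nuni {F : Type*} [Field F] (α : ℕ → F) (q i : ℕ) : Polynomial F :=
  ∏ j ∈ Finset.range i, (Polynomial.X - Polynomial.C (α (j % q)))

noncomputable def Nvec {F : Type*} [Field F] (α : ℕ → F) (q : ℕ) {n : ℕ}
    (i : Fin n → ℕ) : MvPolynomial (Fin n) F :=
  ∏ ℓ, ∏ j ∈ Finset.range (i ℓ), (MvPolynomial.X ℓ - MvPolynomial.C (α (j % q)))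

noncomputable def Eev {F : Type*} [Field F] (α : ℕ → F) (q : ℕ) {n : ℕ}
    (P : MvPolynomial (Fin n) F) (j : Fin n → ℕ) : F :=
  MvPolynomial.eval (fun ℓ => α (j ℓ % q))
    (mvHasseDeriv (Finsupp.equivFunOnFinite.symm fun ℓ => j ℓ / q) P)

noncomputable def Euni {F : Type*} [Field F] (α : ℕ → F) (q : ℕ)
    (P : Polynomial F) (j : ℕ) : F :=
  (Polynomial.hasseDeriv (j / q) P).eval (α (j % q))

def Cset (q s m : ℕ) : Finset (Fin m → ℕ) :=
  (Fintype.piFinset fun _ => Finset.range (s * q)).filter fun v => (∑ ℓ, v ℓ / q) < s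

def Rset (q : ℕ) (d : ℤ) (s m : ℕ) : Finset (Fin m → ℕ) :=
  (Cset q s m).filter fun v => d < ∑ ℓ, (v ℓ : ℤ)

def Δfun (q : ℕ) (d' s' : ℤ) : ℤ := (s' - max ((d' + 1).fdiv (q : ℤ)) 0) * (q : ℤ)

def supportedOn (F : Type*) [Field F] {n : ℕ} (I : Set (Fin n → ℕ)) :
    Submodule F (MvPolynomial (Fin n) F) where
  carrier := {P | ∀ m ∈ P.support, ⇑m ∈ I}
  zero_mem' := by simp
  add_mem' := by
    intro a b ha hb m hm
    rcases Finset.mem_union.mp (MvPolynomial.support_add hm) with h | h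
    · exact ha m h
    · exact hb m h
  smul_mem' := by
    intro c a ha m hm
    exact ha m (MvPolynomial.support_smul hm)

theorem eval_mvHasseDeriv {σ R : Type*} [CommSemiring R] (s : σ →₀ ℕ)
    (P : MvPolynomial σ R) (c : σ → R) :
    MvPolynomial.eval c (mvHasseDeriv s P) =
      MvPolynomial.coeff s
        (MvPolynomial.eval₂ MvPolynomial.C (fun i => MvPolynomial.X i + MvPolynomial.C (c i)) P) := by
  rw [mvHasseDeriv, ← MvPolynomial.coeff_map,
    MvPolynomial.eval₂_comp_left (MvPolynomial.map (MvPolynomial.eval c))]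
  have h1 : (MvPolynomial.map (MvPolynomial.eval c)).comp
      ((MvPolynomial.C (R := MvPolynomial σ R) (σ := σ)).comp MvPolynomial.C) =
      (MvPolynomial.C : R →+* MvPolynomial σ R) := by
    ext r; simp
  have h2 : (⇑(MvPolynomial.map (MvPolynomial.eval c)) ∘ fun i =>
      MvPolynomial.C (MvPolynomial.X i) + MvPolynomial.X i) =
      fun i => MvPolynomial.X i + MvPolynomial.C (c i) := by
    funext i; simp [add_comm]
  rw [h1, h2]

theorem Eev_eq {F : Type*} [Field F] (α : ℕ → F) (q : ℕ) {n : ℕ}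
    (P : MvPolynomial (Fin n) F) (j : Fin n → ℕ) :
    Eev α q P j = MvPolynomial.coeff (Finsupp.equivFunOnFinite.symm fun ℓ => j ℓ / q)
      (MvPolynomial.eval₂ MvPolynomial.C
        (fun ℓ => MvPolynomial.X ℓ + MvPolynomial.C (α (j ℓ % q))) P) := by
  rw [Eev, eval_mvHasseDeriv]

theorem Eev_add {F : Type*} [Field F] (α : ℕ → F) (q : ℕ) {n : ℕ}
    (P Q : MvPolynomial (Fin n) F) (j : Fin n → ℕ) :
    Eev α q (P + Q) j = Eev α q P j + Eev α q Q j := by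
  simp [Eev_eq, MvPolynomial.eval₂_add, MvPolynomial.coeff_add]

theorem Eev_smul {F : Type*} [Field F] (α : ℕ → F) (q : ℕ) {n : ℕ}
    (c : F) (P : MvPolynomial (Fin n) F) (j : Fin n → ℕ) :
    Eev α q (c • P) j = c * Eev α q P j := by
  simp [Eev_eq, MvPolynomial.smul_eq_C_mul, MvPolynomial.eval₂_mul, MvPolynomial.eval₂_C]

theorem eval₂_Nvec {F : Type*} [Field F] (α : ℕ → F) (q : ℕ) {n : ℕ}
    (i : Fin n → ℕ) (c : Fin n → F) :
    MvPolynomial.eval₂ MvPolynomial.C (fun ℓ => MvPolynomial.X ℓ + MvPolynomial.C (c ℓ))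
        (Nvec α q i) =
      ∏ ℓ, ∏ t ∈ Finset.range (i ℓ),
        (MvPolynomial.X ℓ + MvPolynomial.C (c ℓ - α (t % q))) := by
  rw [Nvec, show MvPolynomial.eval₂ MvPolynomial.C
      (fun ℓ => MvPolynomial.X ℓ + MvPolynomial.C (c ℓ)) = ⇑(MvPolynomial.eval₂Hom
      MvPolynomial.C (fun ℓ => MvPolynomial.X ℓ + MvPolynomial.C (c ℓ))) from rfl, map_prod]
  refine Finset.prod_congr rfl fun ℓ _ => ?_
  rw [map_prod]
  refine Finset.prod_congr rfl fun t _ => ?_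
  simp [MvPolynomial.C_sub]
  ring

theorem mem_image_iff_mod {q : ℕ} (hq : 0 < q) (k r : ℕ) (hr : r < q) (t : ℕ) :
    t ∈ (Finset.range k).image (fun u => r + q * u) ↔ t < q * k + r ∧ t % q = r := by
  constructor
  · rintro ht
    simp only [Finset.mem_image, Finset.mem_range] at ht
    obtain ⟨u, hu, rfl⟩ := ht
    have hmul : q * u < q * k := (Nat.mul_lt_mul_left hq).mpr hu
    refine ⟨by omega, ?_⟩
    simp [Nat.add_mul_mod_self_left, Nat.mod_eq_of_lt hr]
  · rintro ⟨hlt, hmod⟩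
    simp only [Finset.mem_image, Finset.mem_range]
    refine ⟨t / q, ?_, ?_⟩
    · have h1 : q * (t / q) + r = t := by rw [← hmod]; exact Nat.div_add_mod t q
      have : q * (t / q) < q * k := by omega
      exact Nat.lt_of_mul_lt_mul_left this
    · rw [← hmod]
      exact Nat.mod_add_div t q

theorem Eev_Nvec_eq_zero {F : Type*} [Field F] (α : ℕ → F) {q : ℕ} (hq : 0 < q) {n : ℕ}
    (i j : Fin n → ℕ) (ℓ0 : Fin n) (hlt : j ℓ0 < i ℓ0) :
    Eev α q (Nvec α q i) j = 0 := by
  rw [Eev_eq, eval₂_Nvec]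
  set r := j ℓ0 % q with hr
  set k := j ℓ0 / q with hk
  set S := (Finset.range (k + 1)).image (fun u => r + q * u) with hSdef
  have hsub : S ⊆ Finset.range (i ℓ0) := by
    intro t ht
    simp only [hSdef, Finset.mem_image, Finset.mem_range] at ht
    obtain ⟨u, hu, rfl⟩ := ht
    have h1 : q * u ≤ q * k := Nat.mul_le_mul_left q (by omega)
    have h2 : r + q * k = j ℓ0 := by rw [hr, hk, add_comm]; exact Nat.div_add_mod _ _
    exact Finset.mem_range.mpr (by omega)
  have hprodS : ∏ t ∈ S, (MvPolynomial.X ℓ0 + MvPolynomial.C (α (j ℓ0 % q) - α (t % q))) =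
      (MvPolynomial.X (R := F) ℓ0) ^ (k + 1) := by
    have hcongr : ∀ t ∈ S, (MvPolynomial.X ℓ0 + MvPolynomial.C (α (j ℓ0 % q) - α (t % q))) =
        (MvPolynomial.X (R := F) ℓ0) := by
      intro t ht
      simp only [hSdef, Finset.mem_image, Finset.mem_range] at ht
      obtain ⟨u, hu, rfl⟩ := ht
      have : (r + q * u) % q = r := by
        simp [Nat.add_mul_mod_self_left, hr]
      rw [this, ← hr, sub_self, map_zero, add_zero]
    rw [Finset.prod_congr rfl hcongr, Finset.prod_const]
    congr 1
    rw [hSdef, Finset.card_image_of_injective _ (fun a b hab => by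
      have : q * a = q * b := by omega
      exact Nat.eq_of_mul_eq_mul_left hq this), Finset.card_range]
  have hdvd : (MvPolynomial.X (R := F) ℓ0) ^ (k + 1) ∣
      ∏ ℓ, ∏ t ∈ Finset.range (i ℓ),
        (MvPolynomial.X ℓ + MvPolynomial.C (α (j ℓ % q) - α (t % q))) := by
    refine dvd_trans ?_ (Finset.dvd_prod_of_mem _ (Finset.mem_univ ℓ0))
    rw [← hprodS]
    exact Finset.prod_dvd_prod_of_subset _ _ _ hsub
  obtain ⟨R, hR⟩ := hdvd
  rw [hR, X_pow_eq_monomial, coeff_monomial_mul', if_neg]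
  intro hle
  have := (Finsupp.single_le_iff).mp hle
  simp only [Finsupp.coe_equivFunOnFinite_symm] at this
  omega

theorem prod_univ_X_pow {F : Type*} [Field F] {n : ℕ} (s : Fin n →₀ ℕ) :
    ∏ ℓ, (MvPolynomial.X ℓ : MvPolynomial (Fin n) F) ^ s ℓ = monomial s 1 := by
  rw [← MvPolynomial.prod_X_pow_eq_monomial]
  exact (Finset.prod_subset (Finset.subset_univ _) (fun x _ hx => by
    simp [Finsupp.notMem_support_iff.mp hx])).symm

theorem Eev_Nvec_self_ne_zero {F : Type*} [Field F] (α : ℕ → F) {q : ℕ} (hq : 0 < q)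
    (hinj : ∀ a < q, ∀ b < q, α a = α b → a = b) {n : ℕ} (i : Fin n → ℕ) :
    Eev α q (Nvec α q i) i ≠ 0 := by
  rw [Eev_eq, eval₂_Nvec]
  set s : Fin n →₀ ℕ := Finsupp.equivFunOnFinite.symm fun ℓ => i ℓ / q with hs
  have hsapp : ∀ ℓ, s ℓ = i ℓ / q := fun ℓ => rfl
  set Sf : Fin n → Finset ℕ := fun ℓ => (Finset.range (i ℓ / q)).image (fun u => i ℓ % q + q * u)
    with hSf
  have hmem : ∀ ℓ t, t ∈ Sf ℓ ↔ t < i ℓ ∧ t % q = i ℓ % q := by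
    intro ℓ t
    have := mem_image_iff_mod hq (i ℓ / q) (i ℓ % q) (Nat.mod_lt _ hq) t
    rwa [Nat.div_add_mod] at this
  have hsub : ∀ ℓ, Sf ℓ ⊆ Finset.range (i ℓ) := by
    intro ℓ t ht
    exact Finset.mem_range.mpr ((hmem ℓ t).mp ht).1
  have hsplit : ∀ ℓ, ∏ t ∈ Finset.range (i ℓ),
      (MvPolynomial.X ℓ + MvPolynomial.C (α (i ℓ % q) - α (t % q))) =
      (∏ t ∈ Finset.range (i ℓ) \ Sf ℓ,
        (MvPolynomial.X ℓ + MvPolynomial.C (α (i ℓ % q) - α (t % q)))) *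
      (MvPolynomial.X (R := F) ℓ) ^ (s ℓ) := by
    intro ℓ
    rw [← Finset.prod_sdiff (hsub ℓ)]
    congr 1
    have hcongr : ∀ t ∈ Sf ℓ, (MvPolynomial.X ℓ + MvPolynomial.C (α (i ℓ % q) - α (t % q))) =
        (MvPolynomial.X (R := F) ℓ) := by
      intro t ht
      rw [((hmem ℓ t).mp ht).2, sub_self, map_zero, add_zero]
    rw [Finset.prod_congr rfl hcongr, Finset.prod_const]
    congr 1
    rw [hSf]
    rw [Finset.card_image_of_injective _ (fun a b hab => by
      have : q * a = q * b := by omega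
      exact Nat.eq_of_mul_eq_mul_left hq this), Finset.card_range, hsapp]
  rw [Finset.prod_congr rfl (fun ℓ _ => hsplit ℓ), Finset.prod_mul_distrib,
    prod_univ_X_pow, coeff_mul_monomial', if_pos le_rfl, tsub_self, mul_one]
  have : MvPolynomial.coeff 0 (∏ ℓ, ∏ t ∈ Finset.range (i ℓ) \ Sf ℓ,
      (MvPolynomial.X ℓ + MvPolynomial.C (α (i ℓ % q) - α (t % q)))) =
      ∏ ℓ, ∏ t ∈ Finset.range (i ℓ) \ Sf ℓ, (α (i ℓ % q) - α (t % q)) := by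
    rw [show (MvPolynomial.coeff (0 : Fin n →₀ ℕ) : MvPolynomial (Fin n) F → F) =
      ⇑(MvPolynomial.constantCoeff) from rfl, map_prod]
    refine Finset.prod_congr rfl fun ℓ _ => ?_
    rw [map_prod]
    refine Finset.prod_congr rfl fun t _ => ?_
    simp
  rw [this]
  rw [Finset.prod_ne_zero_iff]
  intro ℓ _
  rw [Finset.prod_ne_zero_iff]
  intro t ht
  rw [Finset.mem_sdiff, Finset.mem_range, hmem] at ht
  have htq : t % q ≠ i ℓ % q := fun h => ht.2 ⟨ht.1, h⟩
  intro h0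
  exact htq (hinj _ (Nat.mod_lt _ hq) _ (Nat.mod_lt _ hq) (sub_eq_zero.mp h0).symm)

theorem mem_support_Nvec_le {F : Type*} [Field F] (α : ℕ → F) (q : ℕ) {n : ℕ}
    (i : Fin n → ℕ) {mo : Fin n →₀ ℕ} (h : mo ∈ (Nvec α q i).support) : ⇑mo ≤ i := by
  intro ℓ'
  refine le_trans (MvPolynomial.monomial_le_degreeOf ℓ' h) ?_
  rw [Nvec]
  refine le_trans (MvPolynomial.degreeOf_prod_le ℓ' _ _) ?_
  have hbound : ∀ ℓ : Fin n, MvPolynomial.degreeOf ℓ'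
      (∏ t ∈ Finset.range (i ℓ), (MvPolynomial.X ℓ - MvPolynomial.C (α (t % q)))) ≤
      if ℓ' = ℓ then i ℓ else 0 := by
    intro ℓ
    refine le_trans (MvPolynomial.degreeOf_prod_le ℓ' _ _) ?_
    have h1 : ∀ t : ℕ, MvPolynomial.degreeOf ℓ'
        ((MvPolynomial.X ℓ - MvPolynomial.C (α (t % q))) : MvPolynomial (Fin n) F) ≤
        if ℓ' = ℓ then 1 else 0 := by
      intro t
      refine le_trans (MvPolynomial.degreeOf_sub_le ℓ' _ _) ?_
      rw [MvPolynomial.degreeOf_X, MvPolynomial.degreeOf_C]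
      simp
    refine le_trans (Finset.sum_le_sum fun t _ => h1 t) ?_
    rw [Finset.sum_const, Finset.card_range]
    split_ifs <;> simp
  refine le_trans (Finset.sum_le_sum fun ℓ _ => hbound ℓ) ?_
  rw [Finset.sum_ite_eq]
  simp

theorem exists_interp {F : Type*} [Field F] (α : ℕ → F) {q : ℕ} (hq : 0 < q)
    (hinj : ∀ a < q, ∀ b < q, α a = α b → a = b) {n : ℕ} :
    ∀ (N : ℕ) (I : Finset (Fin n → ℕ)), I.card ≤ N →
    (∀ i j : Fin n → ℕ, i ≤ j → j ∈ I → i ∈ I) → ∀ m : (Fin n → ℕ) → F,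
    ∃ P : MvPolynomial (Fin n) F, (∀ mo ∈ P.support, ⇑mo ∈ I) ∧ ∀ j ∈ I, Eev α q P j = m j := by
  intro N
  induction N with
  | zero =>
    intro I hcard hdc m
    have : I = ∅ := Finset.card_eq_zero.mp (le_antisymm hcard (Nat.zero_le _))
    subst this
    exact ⟨0, by simp, by intro j hj; simp at hj⟩
  | succ N ih =>
    intro I hcard hdc m
    rcases eq_or_ne I ∅ with rfl | hne
    · exact ⟨0, by simp, by intro j hj; simp at hj⟩
    · have hne' : (↑I : Set (Fin n → ℕ)).Nonempty := by
        simpa using Finset.nonempty_iff_ne_empty.mpr hne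
      obtain ⟨istar, histar, hmax⟩ :=
        Set.Finite.exists_maximalFor id (↑I : Set (Fin n → ℕ)) I.finite_toSet hne'
      simp only [id] at hmax
      replace hmax : ∀ j ∈ I, istar ≤ j → istar = j := fun j hj h => le_antisymm h (hmax hj h)
      have histar' : istar ∈ I := histar
      set I' := I.erase istar with hI'
      have hdc' : ∀ i j : Fin n → ℕ, i ≤ j → j ∈ I' → i ∈ I' := by
        intro a b hab hb
        rw [hI', Finset.mem_erase] at hb ⊢
        refine ⟨?_, hdc a b hab hb.2⟩
        rintro rfl
        exact hb.1 (hmax b hb.2 hab).symm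
      have hcard' : I'.card ≤ N := by
        rw [hI', Finset.card_erase_of_mem histar']
        omega
      obtain ⟨P', hP'supp, hP'ev⟩ := ih I' hcard' hdc' m
      set e := Eev α q (Nvec α q istar) istar with he
      have hene : e ≠ 0 := Eev_Nvec_self_ne_zero α hq hinj istar
      set c := (m istar - Eev α q P' istar) / e with hc
      refine ⟨P' + c • Nvec α q istar, ?_, ?_⟩
      · intro mo hmo
        rcases Finset.mem_union.mp (MvPolynomial.support_add hmo) with h | h
        · exact Finset.mem_of_mem_erase (hP'supp mo h)
        · have hle : ⇑mo ≤ istar := mem_support_Nvec_le α q istar (MvPolynomial.support_smul h)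
          exact hdc _ _ hle histar'
      · intro j hj
        rw [Eev_add, Eev_smul]
        rcases eq_or_ne j istar with rfl | hjne
        · have hz : Eev α q P' j = Eev α q P' j := rfl
          rw [← he, hc, div_mul_cancel₀ _ hene]
          ring
        · have hjI' : j ∈ I' := Finset.mem_erase.mpr ⟨hjne, hj⟩
          have hnle : ¬ istar ≤ j := fun hle => hjne (hmax j hj hle).symm
          have hex : ∃ ℓ0, j ℓ0 < istar ℓ0 := by
            by_contra hcon
            push_neg at hcon
            exact hnle fun ℓ => hcon ℓ
          obtain ⟨ℓ0, hℓ0⟩ := hex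
          have hvan : Eev α q (Nvec α q istar) j = 0 :=
            Eev_Nvec_eq_zero α hq istar j ℓ0 hℓ0
          rw [hvan, mul_zero, add_zero]
          exact hP'ev j hjI'

set_option maxHeartbeats 1000000 in
theorem stmt5 {F : Type*} [Field F] [Fintype F] (q : ℕ) (hq : Fintype.card F = q)
    (α : ℕ → F) (hinj : ∀ a < q, ∀ b < q, α a = α b → a = b)
    {n : ℕ} (I : Finset (Fin n → ℕ)) (hne : I.Nonempty)
    (hdc : ∀ i j : Fin n → ℕ, i ≤ j → j ∈ I → i ∈ I)
    (m : (Fin n → ℕ) → F) :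
    ∃! P : MvPolynomial (Fin n) F,
      (∀ mo ∈ P.support, ⇑mo ∈ I) ∧ ∀ j ∈ I, Eev α q P j = m j := by
  classical
  have hq0 : 0 < q := hq ▸ Fintype.card_pos
  obtain ⟨P, hPsupp, hPev⟩ := exists_interp α hq0 hinj I.card I le_rfl hdc m
  refine ⟨P, ⟨hPsupp, hPev⟩, ?_⟩
  rintro Q ⟨hQsupp, hQev⟩
  -- set up the linear map
  set SF : Finset (Fin n →₀ ℕ) := I.map (Finsupp.equivFunOnFinite.symm.toEmbedding) with hSF
  have hmemSF : ∀ d : Fin n →₀ ℕ, d ∈ SF ↔ ⇑d ∈ I := by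
    intro d
    rw [hSF, Finset.mem_map]
    constructor
    · rintro ⟨f, hf, rfl⟩
      simpa using hf
    · intro hd
      exact ⟨⇑d, hd, by simp⟩
  set V := MvPolynomial.restrictSupport F (↑SF : Set (Fin n →₀ ℕ)) with hV
  have hmemV : ∀ R : MvPolynomial (Fin n) F, R ∈ V ↔ ∀ mo ∈ R.support, ⇑mo ∈ I := by
    intro R
    rw [hV, MvPolynomial.restrictSupport, AddMonoidAlgebra.mem_supported]
    constructor
    · intro h mo hmo
      exact (hmemSF mo).mp (h hmo)
    · intro h d hd
      exact Finset.mem_coe.mpr ((hmemSF d).mpr (h d hd))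
  have hfd : FiniteDimensional F V :=
    Module.Finite.of_basis (MvPolynomial.basisRestrictSupport F (↑SF : Set (Fin n →₀ ℕ)))
  let Tbig : MvPolynomial (Fin n) F →ₗ[F] ((↥I) → F) :=
    { toFun := fun P => fun j => Eev α q P ↑j
      map_add' := by
        intro a b
        funext j
        exact Eev_add α q a b ↑j
      map_smul' := by
        intro c a
        funext j
        exact Eev_smul α q c a ↑j }
  let T : V →ₗ[F] ((↥I) → F) := Tbig.domRestrict V
  have hrank : Module.finrank F V = Module.finrank F ((↥I) → F) := by
    rw [Module.finrank_eq_card_basis (MvPolynomial.basisRestrictSupport F (↑SF : Set (Fin n →₀ ℕ))),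
      Module.finrank_fintype_fun_eq_card]
    simp
    rw [hSF]
    exact Finset.card_map _
  have hsurj : Function.Surjective T := by
    intro w
    obtain ⟨P₀, hP₀supp, hP₀ev⟩ := exists_interp α hq0 hinj I.card I le_rfl hdc
      (fun j => if h : j ∈ I then w ⟨j, h⟩ else 0)
    refine ⟨⟨P₀, (hmemV P₀).mpr hP₀supp⟩, ?_⟩
    funext j
    have := hP₀ev ↑j j.2
    show Eev α q P₀ ↑j = w j
    simpa [j.2] using this
  have hTinj : Function.Injective T :=
    (LinearMap.injective_iff_surjective_of_finrank_eq_finrank hrank).mpr hsurj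
  have hPQ : T ⟨Q, (hmemV Q).mpr hQsupp⟩ = T ⟨P, (hmemV P).mpr hPsupp⟩ := by
    funext j
    show Eev α q Q ↑j = Eev α q P ↑j
    rw [hQev ↑j j.2, hPev ↑j j.2]
  have := hTinj hPQ
  exact Subtype.mk_eq_mk.mp this
end

section
/- For integers d, s with 0 ≤ d < sq, the set I_{d,n} = {(\vec{i},\vec{s}) ∈ [q]^n × N^n : |\vec{i} + q\vec{s}| ≤ d} is an information set of the multiplicity code Mult^s_d; equivalently, the map F ↦ (H(F,\vec{t})(α_{\vec{j}}))_{(\vec{j},\vec{t})∈I_{d,n}} from the space of polynomials of total degree at most d to F_q^{binom(n+d,n)} is a bijection. -/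
open MvPolynomial

section basic
variable {σ R : Type*} [CommSemiring R] [DecidableEq σ]

noncomputable def PhiHom (σ R : Type*) [CommSemiring R] :
    MvPolynomial σ R →+* MvPolynomial σ (MvPolynomial σ R) :=
  MvPolynomial.eval₂Hom (MvPolynomial.C.comp MvPolynomial.C)
    (fun i => MvPolynomial.C (MvPolynomial.X i) + MvPolynomial.X i)

lemma mvHasseDeriv_def (s : σ →₀ ℕ) (P : MvPolynomial σ R) :
    mvHasseDeriv s P = MvPolynomial.coeff s (PhiHom σ R P) := rfl

lemma mvHasseDeriv_add (s : σ →₀ ℕ) (P Q : MvPolynomial σ R) :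
    mvHasseDeriv s (P + Q) = mvHasseDeriv s P + mvHasseDeriv s Q := by
  simp [mvHasseDeriv_def, MvPolynomial.coeff_add]

lemma mvHasseDeriv_smul (s : σ →₀ ℕ) (c : R) (P : MvPolynomial σ R) :
    mvHasseDeriv s (c • P) = c • mvHasseDeriv s P := by
  rw [MvPolynomial.smul_eq_C_mul, mvHasseDeriv_def, map_mul]
  have : PhiHom σ R (MvPolynomial.C c) = MvPolynomial.C (MvPolynomial.C c) := by
    simp [PhiHom]
  rw [this, MvPolynomial.coeff_C_mul, mvHasseDeriv_def, MvPolynomial.smul_eq_C_mul]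

lemma mvHasseDeriv_mul (s : σ →₀ ℕ) (P Q : MvPolynomial σ R) :
    mvHasseDeriv s (P * Q) =
      ∑ p ∈ Finset.HasAntidiagonal.antidiagonal s, mvHasseDeriv p.1 P * mvHasseDeriv p.2 Q := by
  simp [mvHasseDeriv_def, map_mul, MvPolynomial.coeff_mul]

lemma mvHasseDeriv_one (s : σ →₀ ℕ) :
    mvHasseDeriv s (1 : MvPolynomial σ R) = if s = 0 then 1 else 0 := by
  rw [mvHasseDeriv_def, map_one, MvPolynomial.coeff_one]
  split_ifs with h1 h2 h2 <;> simp_all [eq_comm]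

end basic

set_option linter.unusedSectionVars false

section aevalX
variable {σ R : Type*} [CommSemiring R] [DecidableEq σ]

lemma PhiHom_C (c : R) : PhiHom σ R (MvPolynomial.C c) = MvPolynomial.C (MvPolynomial.C c) := by
  simp [PhiHom]

lemma PhiHom_X (ℓ : σ) :
    PhiHom σ R (MvPolynomial.X ℓ) =
      MvPolynomial.C (MvPolynomial.X ℓ) + MvPolynomial.X ℓ := by
  simp [PhiHom]

lemma mvHasseDeriv_aeval_X (ℓ : σ) (a : σ →₀ ℕ) (p : Polynomial R) :
    mvHasseDeriv a (Polynomial.aeval (MvPolynomial.X ℓ : MvPolynomial σ R) p) =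
      if a = Finsupp.single ℓ (a ℓ) then
        Polynomial.aeval (MvPolynomial.X ℓ : MvPolynomial σ R) (Polynomial.hasseDeriv (a ℓ) p)
      else 0 := by
  induction p using Polynomial.induction_on' with
  | add p q hp hq =>
    rw [map_add, mvHasseDeriv_add, hp, hq, map_add, map_add]
    split_ifs <;> simp
  | monomial k c =>
    rw [Polynomial.aeval_monomial, MvPolynomial.algebraMap_eq, mvHasseDeriv_def, map_mul,
      map_pow, PhiHom_C, PhiHom_X, MvPolynomial.coeff_C_mul, add_pow]
    have hterm : ∀ m : ℕ,
        MvPolynomial.coeff a ((MvPolynomial.C (MvPolynomial.X ℓ))^m * (MvPolynomial.X ℓ : MvPolynomial σ (MvPolynomial σ R))^(k-m) * ((k.choose m : ℕ) : MvPolynomial σ (MvPolynomial σ R))) =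
          (if Finsupp.single ℓ (k-m) = a then
            (MvPolynomial.X ℓ : MvPolynomial σ R)^m * ((k.choose m : ℕ) : MvPolynomial σ R) else 0) := by
      intro m
      rw [← MvPolynomial.C_eq_coe_nat, mul_right_comm, ← map_pow, ← map_mul,
        MvPolynomial.coeff_C_mul, MvPolynomial.coeff_X_pow]
      split_ifs <;> ring
    rw [MvPolynomial.coeff_sum]
    simp only [hterm]
    by_cases h : a = Finsupp.single ℓ (a ℓ)
    · rw [if_pos h]
      by_cases hk : a ℓ ≤ k
      · rw [Finset.sum_eq_single_of_mem (k - a ℓ) (Finset.mem_range.mpr (by omega))]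
        · rw [if_pos (by rw [Nat.sub_sub_self hk]; exact h.symm)]
          rw [Polynomial.hasseDeriv_monomial, Polynomial.aeval_monomial,
            MvPolynomial.algebraMap_eq, Nat.choose_symm hk, map_mul]
          push_cast [MvPolynomial.C_eq_coe_nat]
          ring
        · intro m hm hne
          rw [if_neg]
          intro hcon
          rw [h] at hcon
          have := Finsupp.single_injective ℓ hcon
          have hm' := Finset.mem_range.mp hm
          omega
      · rw [Finset.sum_eq_zero, Polynomial.hasseDeriv_monomial,
          Nat.choose_eq_zero_of_lt (by omega), Nat.cast_zero, zero_mul,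
          Polynomial.monomial_zero_right, map_zero, mul_zero]
        intro m hm
        rw [if_neg]
        intro hcon
        rw [h] at hcon
        have := Finsupp.single_injective ℓ hcon
        omega
    · rw [if_neg h, Finset.sum_eq_zero, mul_zero]
      intro m hm
      rw [if_neg]
      intro hcon
      apply h
      rw [← hcon]
      simp [Finsupp.single_eq_same, ← hcon]
end aevalX

section prodsec
variable {σ R : Type*} [CommSemiring R] [DecidableEq σ]

lemma mvHasseDeriv_prod (s : Finset σ) (p : σ → Polynomial R) :
    ∀ t : σ →₀ ℕ,
      mvHasseDeriv t (∏ ℓ ∈ s, Polynomial.aeval (MvPolynomial.X ℓ : MvPolynomial σ R) (p ℓ)) =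
      if t.support ⊆ s then
        ∏ ℓ ∈ s, Polynomial.aeval (MvPolynomial.X ℓ : MvPolynomial σ R)
          (Polynomial.hasseDeriv (t ℓ) (p ℓ))
      else 0 := by
  induction s using Finset.induction_on with
  | empty =>
    intro t
    rw [Finset.prod_empty, mvHasseDeriv_one]
    simp [Finset.subset_empty, Finsupp.support_eq_empty]
  | insert _ _ hℓ =>
    rename_i ℓ s' ih'
    intro t
    rw [Finset.prod_insert hℓ, mvHasseDeriv_mul]
    simp only [mvHasseDeriv_aeval_X, ih']
    by_cases hsup : t.support ⊆ insert ℓ s'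
    · rw [if_pos hsup]
      rw [Finset.sum_eq_single_of_mem (⟨Finsupp.single ℓ (t ℓ), t.erase ℓ⟩)
        (Finset.HasAntidiagonal.mem_antidiagonal.mpr (Finsupp.single_add_erase ℓ t))]
      · rw [if_pos (by simp), if_pos ?_]
        · rw [Finset.prod_insert hℓ]
          congr 1
          · simp
          · apply Finset.prod_congr rfl
            intro k hk
            rw [Finsupp.erase_ne (by rintro rfl; exact hℓ hk)]
        · rw [Finsupp.support_erase]
          intro k hk
          have hk1 := Finset.mem_of_mem_erase hk
          have hk2 := Finset.ne_of_mem_erase hk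
          rcases Finset.mem_insert.mp (hsup hk1) with h | h
          · exact absurd h hk2
          · exact h
      · rintro ⟨a, b⟩ hab hne
        rw [Finset.HasAntidiagonal.mem_antidiagonal] at hab
        by_cases h1 : a = Finsupp.single ℓ (a ℓ)
        · by_cases h2 : b.support ⊆ s'
          · exfalso
            apply hne
            have hbl : b ℓ = 0 := by
              by_contra hb
              exact hℓ (h2 (Finsupp.mem_support_iff.mpr hb))
            have hal : a ℓ = t ℓ := by
              have := DFunLike.congr_fun hab ℓ
              simp only [Finsupp.add_apply] at this
              omega
            have ha : a = Finsupp.single ℓ (t ℓ) := by rw [h1, hal]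
            have hb : b = t.erase ℓ := by
              ext k
              by_cases hkl : k = ℓ
              · subst hkl; simp [hbl]
              · have h3 := DFunLike.congr_fun hab k
                simp only [Finsupp.add_apply] at h3
                have hak : a k = 0 := by
                  rw [h1]; exact Finsupp.single_eq_of_ne (fun h => hkl h)
                rw [Finsupp.erase_ne hkl]
                omega
            exact Prod.ext ha hb
          · rw [if_neg h2, mul_zero]
        · rw [if_neg h1, zero_mul]
    · rw [if_neg hsup, Finset.sum_eq_zero]
      rintro ⟨a, b⟩ hab
      rw [Finset.HasAntidiagonal.mem_antidiagonal] at hab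
      by_cases h1 : a = Finsupp.single ℓ (a ℓ)
      · by_cases h2 : b.support ⊆ s'
        · exfalso
          apply hsup
          intro k hk
          have htk : t k ≠ 0 := Finsupp.mem_support_iff.mp hk
          have := DFunLike.congr_fun hab k
          simp only [Finsupp.add_apply] at this
          by_cases hak : a k = 0
          · have hbk : b k ≠ 0 := by omega
            exact Finset.mem_insert_of_mem (h2 (Finsupp.mem_support_iff.mpr hbk))
          · have : k = ℓ := by
              by_contra hkl
              rw [h1] at hak
              exact hak (Finsupp.single_eq_of_ne (fun h => hkl h))
            exact this ▸ Finset.mem_insert_self ℓ s'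
        · rw [if_neg h2, mul_zero]
      · rw [if_neg h1, zero_mul]

lemma eval_mvHasseDeriv_prod [Fintype σ] (p : σ → Polynomial R) (t : σ →₀ ℕ) (x : σ → R) :
    MvPolynomial.eval x
      (mvHasseDeriv t (∏ ℓ, Polynomial.aeval (MvPolynomial.X ℓ : MvPolynomial σ R) (p ℓ))) =
      ∏ ℓ, (Polynomial.hasseDeriv (t ℓ) (p ℓ)).eval (x ℓ) := by
  rw [mvHasseDeriv_prod, if_pos (Finset.subset_univ _), map_prod]
  apply Finset.prod_congr rfl
  intro ℓ _
  rw [Polynomial.aeval_def, MvPolynomial.algebraMap_eq, Polynomial.hom_eval₂]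
  have h1 : (MvPolynomial.eval x).comp MvPolynomial.C = RingHom.id R := by
    ext r; simp
  rw [h1, MvPolynomial.eval_X]
  rfl
end prodsec

section uni
variable {F : Type*} [Field F] (α : ℕ → F) (q : ℕ)

lemma taylor_Nuni (i j : ℕ) :
    Polynomial.taylor (α (j % q)) (Nuni α q i) =
      Polynomial.X ^ ((Finset.range i).filter (fun k => k % q = j % q)).card *
        ∏ k ∈ (Finset.range i).filter (fun k => ¬ k % q = j % q),
          (Polynomial.X + Polynomial.C (α (j % q) - α (k % q))) := by
  have h1 : Polynomial.taylor (α (j % q)) (Nuni α q i) =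
      ∏ k ∈ Finset.range i,
        (Polynomial.X + Polynomial.C (α (j % q) - α (k % q))) := by
    rw [Nuni, ← Polynomial.taylorAlgHom_apply, map_prod]
    apply Finset.prod_congr rfl
    intro k _
    rw [Polynomial.taylorAlgHom_apply, map_sub, Polynomial.taylor_X, Polynomial.taylor_C,
      Polynomial.C_sub]
    ring
  rw [h1, ← Finset.prod_filter_mul_prod_filter_not (Finset.range i) (fun k => k % q = j % q)]
  congr 1
  rw [Finset.prod_congr rfl (g := fun _ => (Polynomial.X : Polynomial F)) ?_, Finset.prod_const]
  intro k hk
  rw [(Finset.mem_filter.mp hk).2]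
  simp

lemma euni_vanish (hq : 0 < q) (i j : ℕ) (hji : j < i) :
    (Polynomial.hasseDeriv (j / q) (Nuni α q i)).eval (α (j % q)) = 0 := by
  rw [← Polynomial.taylor_coeff, taylor_Nuni, Polynomial.X_pow_mul,
    Polynomial.coeff_mul_X_pow', if_neg]
  intro hle
  have hcard : j / q + 1 ≤ ((Finset.range i).filter (fun k => k % q = j % q)).card := by
    have := Finset.card_le_card_of_injOn (f := fun m => j % q + m * q)
      (s := Finset.range (j / q + 1))
      (t := (Finset.range i).filter (fun k => k % q = j % q)) ?_ ?_
    · simpa using this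
    · intro m hm
      rw [Finset.mem_coe, Finset.mem_range] at hm
      rw [Finset.mem_coe, Finset.mem_filter, Finset.mem_range]
      have hm' : m ≤ j / q := Nat.le_of_lt_succ hm
      have hmul : m * q ≤ (j / q) * q := Nat.mul_le_mul_right q hm'
      have h2 : q * (j / q) + j % q = j := Nat.div_add_mod j q
      have hcomm : q * (j / q) = (j / q) * q := Nat.mul_comm _ _
      refine ⟨show j % q + m * q < i by omega, ?_⟩
      show (j % q + m * q) % q = j % q
      rw [Nat.add_mul_mod_self_right]
      exact Nat.mod_eq_of_lt (Nat.mod_lt _ hq)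
    · intro a _ b _ hab
      simp only at hab
      exact Nat.eq_of_mul_eq_mul_right hq (Nat.add_left_cancel hab)
  omega

lemma euni_diag (hq : 0 < q) (hinj : ∀ a < q, ∀ b < q, α a = α b → a = b) (i : ℕ) :
    (Polynomial.hasseDeriv (i / q) (Nuni α q i)).eval (α (i % q)) ≠ 0 := by
  have hA : ((Finset.range i).filter (fun k => k % q = i % q)) =
      (Finset.range (i / q)).image (fun m => i % q + m * q) := by
    ext k
    simp only [Finset.mem_filter, Finset.mem_range, Finset.mem_image]
    constructor
    · rintro ⟨hki, hkq⟩
      have hk2 : q * (k / q) + k % q = k := Nat.div_add_mod k q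
      have hi2 : q * (i / q) + i % q = i := Nat.div_add_mod i q
      have hcm : q * (k / q) = (k / q) * q := Nat.mul_comm _ _
      refine ⟨k / q, ?_, show i % q + k / q * q = k by omega⟩
      by_contra h
      push_neg at h
      have := Nat.mul_le_mul_left q h
      omega
    · rintro ⟨m, hm, rfl⟩
      have hi2 : q * (i / q) + i % q = i := Nat.div_add_mod i q
      have h5 : q * (m + 1) ≤ q * (i / q) := Nat.mul_le_mul_left q hm
      have h6 : q * (m + 1) = q * m + q := by ring
      have h7 : q * m = m * q := Nat.mul_comm _ _
      refine ⟨show i % q + m * q < i by omega, ?_⟩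
      show (i % q + m * q) % q = i % q
      rw [Nat.add_mul_mod_self_right]
      exact Nat.mod_eq_of_lt (Nat.mod_lt _ hq)
  have hcard : ((Finset.range i).filter (fun k => k % q = i % q)).card = i / q := by
    rw [hA, Finset.card_image_of_injective _ ?_, Finset.card_range]
    intro a b hab
    simp only at hab
    exact Nat.eq_of_mul_eq_mul_right hq (Nat.add_left_cancel hab)
  rw [← Polynomial.taylor_coeff, taylor_Nuni, hcard]
  have hc : ∀ p : Polynomial F, (Polynomial.X ^ (i / q) * p).coeff (i / q) = p.coeff 0 := by
    intro p
    simpa using Polynomial.coeff_X_pow_mul p (i / q) 0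
  rw [hc, Polynomial.coeff_zero_eq_eval_zero, Polynomial.eval_prod]
  apply Finset.prod_ne_zero_iff.mpr
  intro k hk
  rw [Finset.mem_filter, Finset.mem_range] at hk
  simp only [Polynomial.eval_add, Polynomial.eval_X, Polynomial.eval_C, zero_add]
  intro hcon
  exact hk.2 (hinj _ (Nat.mod_lt k hq) _ (Nat.mod_lt i hq) (sub_eq_zero.mp hcon).symm)
end uni

section main
variable {F : Type*} [Field F] {n : ℕ} (α : ℕ → F) (q : ℕ) (d : ℕ)

/-- index set -/
def Sset (d : ℕ) (n : ℕ) : Finset (Fin n → ℕ) :=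
  (Fintype.piFinset fun _ => Finset.range (d+1)).filter fun v => ∑ ℓ, v ℓ ≤ d

lemma mem_Sset {d n : ℕ} (v : Fin n → ℕ) : v ∈ Sset d n ↔ ∑ ℓ, v ℓ ≤ d := by
  constructor
  · exact fun h => (Finset.mem_filter.mp h).2
  · intro h
    refine Finset.mem_filter.mpr ⟨Fintype.mem_piFinset.mpr fun ℓ => ?_, h⟩
    rw [Finset.mem_range]
    have : v ℓ ≤ ∑ k, v k := Finset.single_le_sum (fun k _ => Nat.zero_le (v k)) (Finset.mem_univ ℓ)
    omega

/-- the product of univariate N's as a multivariate polynomial -/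
noncomputable def NV {F : Type*} [Field F] {n : ℕ} (α : ℕ → F) (q : ℕ) (i : Fin n → ℕ) :
    MvPolynomial (Fin n) F :=
  ∏ ℓ, Polynomial.aeval (MvPolynomial.X ℓ) (Nuni α q (i ℓ))

/-- the evaluation linear map -/
noncomputable def Gmap {F : Type*} [Field F] {n : ℕ} (α : ℕ → F) (q d : ℕ) :
    restrictTotalDegree (Fin n) F d →ₗ[F] ({v : Fin n → ℕ // v ∈ Sset d n} → F) where
  toFun P v :=
    MvPolynomial.eval (fun ℓ => α ((v : Fin n → ℕ) ℓ % q))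
      (mvHasseDeriv (Finsupp.equivFunOnFinite.symm fun ℓ => (v : Fin n → ℕ) ℓ / q) (P : MvPolynomial (Fin n) F))
  map_add' P Q := by
    funext v
    simp only [Submodule.coe_add, mvHasseDeriv_add, map_add, Pi.add_apply]
  map_smul' c P := by
    funext v
    show MvPolynomial.eval _ (mvHasseDeriv _ ((c • P : _) : MvPolynomial (Fin n) F)) = _
    rw [SetLike.val_smul, mvHasseDeriv_smul, MvPolynomial.smul_eq_C_mul, map_mul,
      MvPolynomial.eval_C]
    rfl

lemma Gmap_NV {F : Type*} [Field F] {n : ℕ} (α : ℕ → F) (q d : ℕ) (i : Fin n → ℕ)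
    (hmem : NV α q i ∈ restrictTotalDegree (Fin n) F d) (v : {v : Fin n → ℕ // v ∈ Sset d n}) :
    Gmap α q d ⟨NV α q i, hmem⟩ v =
      ∏ ℓ, (Polynomial.hasseDeriv ((v : Fin n → ℕ) ℓ / q) (Nuni α q (i ℓ))).eval
        (α ((v : Fin n → ℕ) ℓ % q)) := by
  classical
  show MvPolynomial.eval _ (mvHasseDeriv _ (NV α q i)) = _
  rw [NV, eval_mvHasseDeriv_prod]
  apply Finset.prod_congr rfl
  intro ℓ _
  congr 1

lemma NV_mem {F : Type*} [Field F] {n : ℕ} (α : ℕ → F) (q d : ℕ) (i : Fin n → ℕ)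
    (hi : ∑ ℓ, i ℓ ≤ d) : NV α q i ∈ restrictTotalDegree (Fin n) F d := by
  rw [mem_restrictTotalDegree]
  refine le_trans (MvPolynomial.totalDegree_finset_prod _ _) (le_trans ?_ hi)
  apply Finset.sum_le_sum
  intro ℓ _
  rw [Nuni, map_prod]
  refine le_trans (MvPolynomial.totalDegree_finset_prod _ _) ?_
  have : ∀ k ∈ Finset.range (i ℓ),
      (Polynomial.aeval (MvPolynomial.X ℓ : MvPolynomial (Fin n) F)
        (Polynomial.X - Polynomial.C (α (k % q)))).totalDegree ≤ 1 := by
    intro k _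
    rw [map_sub, Polynomial.aeval_X, Polynomial.aeval_C, MvPolynomial.algebraMap_eq,
      sub_eq_add_neg]
    refine le_trans (MvPolynomial.totalDegree_add _ _) ?_
    rw [MvPolynomial.totalDegree_neg]
    simp [MvPolynomial.totalDegree_X, MvPolynomial.totalDegree_C]
  refine le_trans (Finset.sum_le_sum this) ?_
  simp

lemma Gmap_bijective (hq : 0 < q) (hinj : ∀ a < q, ∀ b < q, α a = α b → a = b) :
    Function.Bijective (Gmap α q d (n := n)) := by
  classical
  letI instLex : LinearOrder (Lex (Fin n → ℕ)) :=
    @Pi.Lex.linearOrder (Fin n) (fun _ => ℕ) inferInstance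
      (inferInstance : WellFoundedLT (Fin n)) (fun _ => inferInstance)
  set M : Matrix {v : Fin n → ℕ // v ∈ Sset d n} {v : Fin n → ℕ // v ∈ Sset d n} F := fun i v =>
    ∏ ℓ, (Polynomial.hasseDeriv ((v : Fin n → ℕ) ℓ / q) (Nuni α q ((i : Fin n → ℕ) ℓ))).eval
        (α ((v : Fin n → ℕ) ℓ % q)) with hM
  have hMvanish : ∀ i v : {v : Fin n → ℕ // v ∈ Sset d n},
      (∃ ℓ, (v : Fin n → ℕ) ℓ < (i : Fin n → ℕ) ℓ) → M i v = 0 := by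
    rintro i v ⟨ℓ, hℓ⟩
    exact Finset.prod_eq_zero (Finset.mem_univ ℓ) (euni_vanish α q hq _ _ hℓ)
  have hMdiag : ∀ i : {v : Fin n → ℕ // v ∈ Sset d n}, M i i ≠ 0 := by
    intro i
    rw [hM]
    exact Finset.prod_ne_zero_iff.mpr fun ℓ _ => euni_diag α q hq hinj _
  -- sorting the index set along the lexicographic order
  set SL : Finset (Lex (Fin n → ℕ)) :=
    (Sset d n).image (fun v => toLex v) with hSL
  have hcardSL : SL.card = (Sset d n).card :=
    Finset.card_image_of_injective _ toLex.injective
  set e0 := SL.orderIsoOfFin hcardSL with he0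
  have hgmem : ∀ k : Fin (Sset d n).card, ofLex (e0 k : Lex (Fin n → ℕ)) ∈ Sset d n := by
    intro k
    obtain ⟨v, hv, hv2⟩ := Finset.mem_image.mp
      ((e0 k).2 : _ ∈ Finset.image (fun v => toLex v) (Sset d n))
    have hv3 : ofLex (e0 k : Lex (Fin n → ℕ)) = v := congrArg ofLex hv2.symm
    rw [hv3]; exact hv
  set g : Fin (Sset d n).card → {v : Fin n → ℕ // v ∈ Sset d n} :=
    fun k => ⟨ofLex (e0 k : Lex (Fin n → ℕ)), hgmem k⟩ with hg
  have hginj : Function.Injective g := by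
    intro a b hab
    apply e0.injective
    apply Subtype.ext
    show (e0 a : Lex (Fin n → ℕ)) = (e0 b : Lex (Fin n → ℕ))
    exact congrArg (fun z : {v : Fin n → ℕ // v ∈ Sset d n} => toLex (z : Fin n → ℕ)) hab
  have hgbij : Function.Bijective g := by
    rw [Fintype.bijective_iff_injective_and_card]
    exact ⟨hginj, by simp [Fintype.card_coe]⟩
  set ge : Fin (Sset d n).card ≃ {v : Fin n → ℕ // v ∈ Sset d n} := Equiv.ofBijective g hgbij
    with hge
  have htri : (M.submatrix ge ge).BlockTriangular id := by
    intro i j hij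
    simp only [id] at hij
    show M (ge i) (ge j) = 0
    by_contra hne
    have hle : ∀ ℓ, ((ge i : {v : Fin n → ℕ // v ∈ Sset d n}) : Fin n → ℕ) ℓ ≤
        ((ge j : {v : Fin n → ℕ // v ∈ Sset d n}) : Fin n → ℕ) ℓ := by
      intro ℓ
      by_contra hlt
      exact hne (hMvanish _ _ ⟨ℓ, by omega⟩)
    have hlexlt : (e0 j : Lex (Fin n → ℕ)) < (e0 i : Lex (Fin n → ℕ)) := by
      have := e0.lt_iff_lt.mpr hij
      exact this
    have hcoe : ∀ k, toLex (((ge k : {v : Fin n → ℕ // v ∈ Sset d n}) : Fin n → ℕ)) =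
        (e0 k : Lex (Fin n → ℕ)) := by
      intro k
      rfl
    by_cases heq : ((ge i : {v : Fin n → ℕ // v ∈ Sset d n}) : Fin n → ℕ) =
        ((ge j : {v : Fin n → ℕ // v ∈ Sset d n}) : Fin n → ℕ)
    · rw [← hcoe i, ← hcoe j, heq] at hlexlt
      exact lt_irrefl _ hlexlt
    · have : toLex (((ge i : {v : Fin n → ℕ // v ∈ Sset d n}) : Fin n → ℕ)) <
          toLex (((ge j : {v : Fin n → ℕ // v ∈ Sset d n}) : Fin n → ℕ)) :=
        (@Pi.toLex_strictMono (Fin n) (fun _ => ℕ) inferInstance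
          (fun _ => inferInstance) (inferInstance : WellFoundedLT (Fin n)))
          (lt_of_le_of_ne hle heq)
      rw [hcoe i, hcoe j] at this
      exact lt_irrefl _ (hlexlt.trans this)
  have hdet : IsUnit M.det := by
    rw [← Matrix.det_submatrix_equiv_self ge M, Matrix.det_of_upperTriangular htri]
    refine (Finset.prod_ne_zero_iff.mpr fun i _ => ?_).isUnit
    exact hMdiag (ge i)
  -- surjectivity
  have hsurj : Function.Surjective (Gmap α q d (n := n)) := by
    intro y
    set c : {v : Fin n → ℕ // v ∈ Sset d n} → F := Matrix.vecMul y M⁻¹ with hc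
    refine ⟨∑ i : {v : Fin n → ℕ // v ∈ Sset d n}, c i •
      (⟨NV α q (i : Fin n → ℕ), NV_mem α q d _ ((mem_Sset _).mp i.2)⟩ :
        restrictTotalDegree (Fin n) F d), ?_⟩
    funext v
    rw [map_sum]
    have hterm : ∀ i : {v : Fin n → ℕ // v ∈ Sset d n}, (Gmap α q d (c i •
        (⟨NV α q (i : Fin n → ℕ), NV_mem α q d _ ((mem_Sset _).mp i.2)⟩ :
          restrictTotalDegree (Fin n) F d))) v = c i * M i v := by
      intro i
      rw [map_smul]
      have := Gmap_NV α q d (i : Fin n → ℕ) (NV_mem α q d _ ((mem_Sset _).mp i.2)) v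
      simp only [Pi.smul_apply, smul_eq_mul]
      rw [this, hM]
    rw [Finset.sum_apply]
    simp only [hterm]
    have hvm : ∑ i : {v : Fin n → ℕ // v ∈ Sset d n}, c i * M i v = Matrix.vecMul c M v := by
      rw [Matrix.vecMul]
      rfl
    rw [hvm, hc, Matrix.vecMul_vecMul, Matrix.nonsing_inv_mul _ hdet, Matrix.vecMul_one]
  -- injectivity via dimension
  have hle : restrictTotalDegree (Fin n) F d ≤ Submodule.span F
      (((Sset d n).image fun v => MvPolynomial.monomial (Finsupp.equivFunOnFinite.symm v) (1 : F)) :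
        Finset (MvPolynomial (Fin n) F)) := by
    intro P hP
    rw [← MvPolynomial.support_sum_monomial_coeff P]
    apply Submodule.sum_mem
    intro m hm
    have h1 : MvPolynomial.monomial m (MvPolynomial.coeff m P) =
        (MvPolynomial.coeff m P) • MvPolynomial.monomial m (1 : F) := by
      rw [MvPolynomial.smul_monomial, smul_eq_mul, mul_one]
    rw [h1]
    apply Submodule.smul_mem
    apply Submodule.subset_span
    rw [Finset.mem_coe, Finset.mem_image]
    refine ⟨⇑m, ?_, by rw [Finsupp.equivFunOnFinite_symm_coe]⟩
    rw [mem_Sset]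
    have h2 := MvPolynomial.le_totalDegree hm
    have h3 : (m.sum fun _ e => e) = ∑ ℓ, m ℓ := Finsupp.sum_fintype _ _ (fun _ => rfl)
    have h4 := (mem_restrictTotalDegree _ _ _).mp hP
    omega
  have hfd : FiniteDimensional F (restrictTotalDegree (Fin n) F d) :=
    Submodule.finiteDimensional_of_le hle
  have hrankle : Module.finrank F (restrictTotalDegree (Fin n) F d) ≤ (Sset d n).card := by
    refine le_trans (Submodule.finrank_mono hle) ?_
    refine le_trans (finrank_span_finset_le_card _) ?_
    exact Finset.card_image_le
  have hrt : Module.finrank F ({v : Fin n → ℕ // v ∈ Sset d n} → F) = (Sset d n).card := by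
    rw [Module.finrank_fintype_fun_eq_card, Fintype.card_coe]
  have hrge : (Sset d n).card ≤ Module.finrank F (restrictTotalDegree (Fin n) F d) := by
    have h5 := LinearMap.finrank_range_le (Gmap α q d (n := n))
    have hrange : LinearMap.range (Gmap α q d (n := n)) = ⊤ := LinearMap.range_eq_top.mpr hsurj
    rw [hrange, finrank_top, hrt] at h5
    exact h5
  refine ⟨(LinearMap.injective_iff_surjective_of_finrank_eq_finrank ?_).mpr hsurj, hsurj⟩
  omega
end main

theorem stmt7 {F : Type*} [Field F] [Fintype F] (q : ℕ) (hq : Fintype.card F = q)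
    (α : ℕ → F) (hinj : ∀ a < q, ∀ b < q, α a = α b → a = b)
    {n : ℕ} (d s : ℕ) (hds : d < s * q) :
    Function.Bijective
      (fun (P : {P : MvPolynomial (Fin n) F // P.totalDegree ≤ d})
           (jt : {p : (Fin n → ℕ) × (Fin n → ℕ) //
              (∀ ℓ, p.1 ℓ < q) ∧ (∑ ℓ, (p.1 ℓ + q * p.2 ℓ)) ≤ d}) =>
        MvPolynomial.eval (fun ℓ => α (jt.1.1 ℓ))
          (mvHasseDeriv (Finsupp.equivFunOnFinite.symm jt.1.2) P.1)) := by
  classical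
  have hq0 : 0 < q := hq ▸ Fintype.card_pos
  let eT : {p : (Fin n → ℕ) × (Fin n → ℕ) //
        (∀ ℓ, p.1 ℓ < q) ∧ (∑ ℓ, (p.1 ℓ + q * p.2 ℓ)) ≤ d} ≃
      {v : Fin n → ℕ // v ∈ Sset d n} :=
    { toFun := fun jt => ⟨fun ℓ => jt.1.1 ℓ + q * jt.1.2 ℓ, (mem_Sset _).mpr jt.2.2⟩
      invFun := fun v => ⟨(fun ℓ => (v : Fin n → ℕ) ℓ % q, fun ℓ => (v : Fin n → ℕ) ℓ / q),
        ⟨fun ℓ => Nat.mod_lt _ hq0, by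
          have h1 := (mem_Sset (v : Fin n → ℕ)).mp v.2
          have h2 : ∀ ℓ, (v : Fin n → ℕ) ℓ % q + q * ((v : Fin n → ℕ) ℓ / q) =
              (v : Fin n → ℕ) ℓ := fun ℓ => Nat.mod_add_div _ _
          calc ∑ ℓ, ((v : Fin n → ℕ) ℓ % q + q * ((v : Fin n → ℕ) ℓ / q))
              = ∑ ℓ, (v : Fin n → ℕ) ℓ := Finset.sum_congr rfl (fun ℓ _ => h2 ℓ)
            _ ≤ d := h1⟩⟩
      left_inv := fun jt => by
        apply Subtype.ext
        apply Prod.ext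
        · funext ℓ
          show (jt.1.1 ℓ + q * jt.1.2 ℓ) % q = jt.1.1 ℓ
          rw [Nat.add_mul_mod_self_left]
          exact Nat.mod_eq_of_lt (jt.2.1 ℓ)
        · funext ℓ
          show (jt.1.1 ℓ + q * jt.1.2 ℓ) / q = jt.1.2 ℓ
          rw [Nat.add_mul_div_left _ _ hq0, Nat.div_eq_of_lt (jt.2.1 ℓ), zero_add]
      right_inv := fun v => by
        apply Subtype.ext
        funext ℓ
        exact Nat.mod_add_div _ _ }
  let eD : {P : MvPolynomial (Fin n) F // P.totalDegree ≤ d} ≃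
      restrictTotalDegree (Fin n) F d :=
    Equiv.subtypeEquivRight (fun P => (mem_restrictTotalDegree (Fin n) P (m := d)).symm)
  have hfeq : (fun (P : {P : MvPolynomial (Fin n) F // P.totalDegree ≤ d})
           (jt : {p : (Fin n → ℕ) × (Fin n → ℕ) //
              (∀ ℓ, p.1 ℓ < q) ∧ (∑ ℓ, (p.1 ℓ + q * p.2 ℓ)) ≤ d}) =>
        MvPolynomial.eval (fun ℓ => α (jt.1.1 ℓ))
          (mvHasseDeriv (Finsupp.equivFunOnFinite.symm jt.1.2) P.1)) =
      (fun P jt => Gmap α q d (eD P) (eT jt)) := by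
    funext P jt
    show MvPolynomial.eval _ (mvHasseDeriv _ _) = MvPolynomial.eval _ (mvHasseDeriv _ _)
    have hmod : (fun ℓ => α (jt.1.1 ℓ)) =
        (fun ℓ => α (((eT jt : {v : Fin n → ℕ // v ∈ Sset d n}) : Fin n → ℕ) ℓ % q)) := by
      funext ℓ
      congr 1
      show jt.1.1 ℓ = (jt.1.1 ℓ + q * jt.1.2 ℓ) % q
      rw [Nat.add_mul_mod_self_left]
      exact (Nat.mod_eq_of_lt (jt.2.1 ℓ)).symm
    have hdiv : (Finsupp.equivFunOnFinite.symm jt.1.2) =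
        (Finsupp.equivFunOnFinite.symm
          (fun ℓ => ((eT jt : {v : Fin n → ℕ // v ∈ Sset d n}) : Fin n → ℕ) ℓ / q)) := by
      congr 1
      funext ℓ
      show jt.1.2 ℓ = (jt.1.1 ℓ + q * jt.1.2 ℓ) / q
      rw [Nat.add_mul_div_left _ _ hq0, Nat.div_eq_of_lt (jt.2.1 ℓ), zero_add]
    rw [hmod, hdiv]
    rfl
  rw [hfeq]
  have hprecomp : Function.Bijective
      (fun (g : {v : Fin n → ℕ // v ∈ Sset d n} → F) => g ∘ eT) := by
    constructor
    · intro g h hgh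
      funext v
      have := congrFun hgh (eT.symm v)
      simpa [Function.comp, Equiv.apply_symm_apply] using this
    · intro y
      refine ⟨y ∘ eT.symm, ?_⟩
      funext jt
      simp [Function.comp, Equiv.symm_apply_apply]
  exact hprecomp.comp ((Gmap_bijective α q d hq0 hinj).comp eD.bijective)
end
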